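/- arXiv:2003.12817 — 6 statements merged into one kernel-verified Lean document; each statement's English description precedes it below -/
import Mathlib

section
/- Consider the discrete-time linear dynamical system α_k = Φ α_{k−1} + Ψ v_k with state dimension N, input dimension L, admissible supports set U, and M = ∪_{S∈U} S. If there exists λ ∈ ℂ such that the complex N × (N+|M|) matrix [λI − Φ, Ψ_M] has rank strictly less than N, then the system is not U-sparse controllable. -/
/-! A nonzero left null vector `w` of `[λI − Φ, Ψ_M]` is a left eigenvector of `Φ`
(`w Φ = λ w`) that annihilates every column of `Ψ` an admissible input can use. Hence the
mode `w ⬝ α_k` ignores the inputs and evolves as `λ^k (w ⬝ α_0)`: starting from `α_0 = 0` it stays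
`0`, so no real target `α_f` with `w ⬝ α_f ≠ 0` is reachable. -/

open Matrix

open scoped Classical

noncomputable section

/-- The state trajectory of the discrete-time linear dynamical system
`α_k = Φ α_{k-1} + Ψ v_k`. -/
def traj {N L : ℕ} (Φ : Matrix (Fin N) (Fin N) ℝ) (Ψ : Matrix (Fin N) (Fin L) ℝ)
    (x0 : Fin N → ℝ) (v : ℕ → Fin L → ℝ) : ℕ → Fin N → ℝ
  | 0 => x0
  | k + 1 => Φ.mulVec (traj Φ Ψ x0 v k) + Ψ.mulVec (v (k + 1))

/-- `U`-sparse controllability: any initial state can be steered to any final state in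
finitely many steps using inputs whose supports are contained in members of `U`. -/
def SparseControllable {N L : ℕ} (Φ : Matrix (Fin N) (Fin N) ℝ)
    (Ψ : Matrix (Fin N) (Fin L) ℝ) (U : Set (Finset (Fin L))) : Prop :=
  ∀ x0 xf : Fin N → ℝ, ∃ K : ℕ, ∃ v : ℕ → Fin L → ℝ,
    (∀ k, 1 ≤ k → k ≤ K → ∃ S ∈ U, ∀ i, v k i ≠ 0 → i ∈ S) ∧
    traj Φ Ψ x0 v K = xf

theorem Matrix.exists_ne_zero_vecMul_eq_zero_of_rank_lt {K m n : Type*} [Field K] [Fintype m]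
    [Fintype n] {A : Matrix m n K} (h : A.rank < Fintype.card m) : ∃ w ≠ 0, w ᵥ* A = 0 := by
  have hA : ¬LinearIndependent K A.row := fun hA => h.ne hA.rank_matrix
  obtain ⟨w, hw, i, hi⟩ := Fintype.not_linearIndependent_iff.mp hA
  refine ⟨w, fun h0 => hi (congrFun h0 i), ?_⟩
  rwa [vecMul_eq_sum]

theorem Matrix.vecMul_eq_smul_and_vecMul_eq_zero_of_vecMul_fromCols {K m n : Type*} [Field K]
    [Fintype m] [DecidableEq m] {w : m → K} {lam : K} {A : Matrix m m K} {B : Matrix m n K}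
    (h : w ᵥ* fromCols (lam • 1 - A) B = 0) : w ᵥ* A = lam • w ∧ w ᵥ* B = 0 := by
  rw [vecMul_fromCols, ← Sum.elim_zero_zero, Sum.elim_eq_iff, vecMul_sub, vecMul_smul, vecMul_one,
    sub_eq_zero] at h
  exact ⟨h.1.symm, h.2⟩

theorem Matrix.dotProduct_eq_zero_of_forall_ne_zero {R n : Type*} [Fintype n]
    [NonUnitalNonAssocSemiring R] {a b : n → R} (h : ∀ i, b i ≠ 0 → a i = 0) : a ⬝ᵥ b = 0 :=
  Finset.sum_eq_zero fun i _ => by by_cases hb : b i = 0 <;> simp [hb, h]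

theorem exists_dotProduct_ofReal_ne_zero {n : Type*} [Fintype n] [DecidableEq n] {w : n → ℂ}
    (hw : w ≠ 0) : ∃ x : n → ℝ, w ⬝ᵥ ((↑) ∘ x) ≠ 0 := by
  obtain ⟨j, hj⟩ := Function.ne_iff.mp hw
  refine ⟨Pi.single j 1, ?_⟩
  simpa [dotProduct, Pi.single_apply, apply_ite (fun r : ℝ => (r : ℂ))] using hj

section Trajectory

variable {N L : ℕ} (Φ : Matrix (Fin N) (Fin N) ℝ) (Ψ : Matrix (Fin N) (Fin L) ℝ)
  (x0 : Fin N → ℝ) (v : ℕ → Fin L → ℝ)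

theorem ofReal_comp_traj_succ (k : ℕ) :
    ((↑) ∘ traj Φ Ψ x0 v (k + 1) : Fin N → ℂ) =
      Φ.map (↑) *ᵥ ((↑) ∘ traj Φ Ψ x0 v k) + Ψ.map (↑) *ᵥ ((↑) ∘ v (k + 1)) := by
  funext j
  simp only [traj, Function.comp_apply, Pi.add_apply, Complex.ofReal_add]
  exact congrArg₂ (· + ·) (RingHom.map_mulVec Complex.ofRealHom Φ _ j)
    (RingHom.map_mulVec Complex.ofRealHom Ψ _ j)

theorem dotProduct_traj_of_vecMul_eq_smul {w : Fin N → ℂ} {lam : ℂ}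
    (hΦ : w ᵥ* Φ.map (↑) = lam • w) (K : ℕ)
    (hv : ∀ k, 1 ≤ k → k ≤ K → w ⬝ᵥ (Ψ.map (↑) *ᵥ ((↑) ∘ v k)) = 0) :
    w ⬝ᵥ ((↑) ∘ traj Φ Ψ x0 v K) = lam ^ K * w ⬝ᵥ ((↑) ∘ x0) := by
  induction K with
  | zero => simp [traj]
  | succ k ih =>
    rw [ofReal_comp_traj_succ, dotProduct_add, hv (k + 1) (Nat.le_add_left 1 k) le_rfl,
      dotProduct_mulVec, hΦ, smul_dotProduct, ih fun i hi hik => hv i hi (hik.trans k.le_succ),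
      smul_eq_mul, add_zero, pow_succ]
    ring

end Trajectory

theorem not_sparse_controllable_of_PBH_rank_deficient_general {N L : ℕ}
    (Φ : Matrix (Fin N) (Fin N) ℝ) (Ψ : Matrix (Fin N) (Fin L) ℝ)
    (U : Set (Finset (Fin L)))
    (h : ∃ lam : ℂ,
        (Matrix.fromCols
            (lam • (1 : Matrix (Fin N) (Fin N) ℂ) - Φ.map (fun x => (x : ℂ)))
            ((Ψ.map (fun x => (x : ℂ))).submatrix id
              (Subtype.val : {i : Fin L // ∃ S ∈ U, i ∈ S} → Fin L))).rank < N) :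
    ¬ SparseControllable Φ Ψ U := by
  obtain ⟨lam, hrank⟩ := h
  obtain ⟨w, hw0, hw⟩ :=
    exists_ne_zero_vecMul_eq_zero_of_rank_lt (by rwa [Fintype.card_fin])
  obtain ⟨hΦ, hΨ⟩ := vecMul_eq_smul_and_vecMul_eq_zero_of_vecMul_fromCols hw
  obtain ⟨xf, hxf⟩ := exists_dotProduct_ofReal_ne_zero hw0
  intro hc
  obtain ⟨K, v, hv, rfl⟩ := hc 0 xf
  have hinputs : ∀ k, 1 ≤ k → k ≤ K → w ⬝ᵥ (Ψ.map (↑) *ᵥ ((↑) ∘ v k)) = 0 := by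
    intro k hk1 hkK
    obtain ⟨S, hS, hvS⟩ := hv k hk1 hkK
    rw [dotProduct_mulVec]
    refine dotProduct_eq_zero_of_forall_ne_zero fun i hi => congrFun hΨ ⟨i, S, hS, hvS i ?_⟩
    simpa using hi
  have hmode := dotProduct_traj_of_vecMul_eq_smul Φ Ψ 0 v hΦ K hinputs
  exact hxf (by simpa using hmode)

theorem not_sparse_controllable_of_PBH_rank_deficient {N L : ℕ} (s : ℕ)
    (Φ : Matrix (Fin N) (Fin N) ℝ) (Ψ : Matrix (Fin N) (Fin L) ℝ)
    (U : Set (Finset (Fin L))) (hU : ∀ S ∈ U, S.card = s)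
    (h : ∃ lam : ℂ,
        (Matrix.fromCols
            (lam • (1 : Matrix (Fin N) (Fin N) ℂ) - Φ.map (fun x => (x : ℂ)))
            ((Ψ.map (fun x => (x : ℂ))).submatrix id
              (Subtype.val : {i : Fin L // ∃ S ∈ U, i ∈ S} → Fin L))).rank < N) :
    ¬ SparseControllable Φ Ψ U :=
  not_sparse_controllable_of_PBH_rank_deficient_general Φ Ψ U h
end
end

section
/- For every B ≥ 1 there exist constants δ₀ ∈ (0,1) and ε ∈ (0,1), depending only on B, with the following property: for every p ∈ [0,1], every random variable ξ with variance 1 and E[ξ⁴] ≤ B, and every random variable ζ ∈ {0,1} independent of ξ with P(ζ = 1) = p, the Lévy concentration function satisfies L(ζξ, ε) ≤ 1 − δ₀ p. -/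
/-!
On the event `ζ = 0` the product `ζξ` is concentrated at `0`, so the whole content is an
anticoncentration bound for `ξ` itself: `P(|ξ - z| ≤ 1/2) ≤ 1 - δ` uniformly in `z`. With
`Y = (ξ - z)²` one has `E[Y] = 1 + (E[ξ] - z)² ≥ 1` and, since `E[ξ]² ≤ E[ξ²] ≤ B`, the
fourth-moment bound gives `E[Y²] ≤ 136 B² E[Y]²`; a Paley–Zygmund inequality then bounds
`P(Y > 1/4)` from below. Independence turns this into
`L(ζξ, 1/2) ≤ (1 - p) + p (1 - δ) = 1 - δ p`.
-/

open MeasureTheory ProbabilityTheory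

noncomputable section

/-- The Lévy concentration function `L(X, ε) = sup_z P(|X − z| ≤ ε)`. -/
def levyConcentration {Ω : Type} [MeasurableSpace Ω] (μ : Measure Ω) (X : Ω → ℝ)
    (ε : ℝ) : ℝ :=
  ⨆ z : ℝ, (μ {ω | |X ω - z| ≤ ε}).toReal

section

variable {Ω : Type*} [MeasurableSpace Ω] {μ : Measure Ω} [IsProbabilityMeasure μ]

/-- A Paley–Zygmund inequality with a worse constant: integrating the pointwise bound
`Y ≤ t + K·𝟙{t < Y} + Y²/K` with `K = 2C·E[Y]` avoids Cauchy–Schwarz. -/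
lemma one_div_le_measureReal_lt_of_integral_sq_le {Y : Ω → ℝ} (hYm : Measurable Y)
    (hY : Integrable Y μ) (hY2 : Integrable (fun ω => Y ω ^ 2) μ) {C t : ℝ}
    (hC : 0 < C) (ht : 0 ≤ t) (hmean : 0 < ∫ ω, Y ω ∂μ) (htmean : 4 * t ≤ ∫ ω, Y ω ∂μ)
    (hsecond : ∫ ω, Y ω ^ 2 ∂μ ≤ C * (∫ ω, Y ω ∂μ) ^ 2) :
    1 / (8 * C) ≤ μ.real {ω | t < Y ω} := by
  set K := 2 * C * ∫ ω, Y ω ∂μ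
  have hK : 0 < K := by positivity
  have hs : MeasurableSet {ω | t < Y ω} := measurableSet_lt measurable_const hYm
  have hpointwise : ∀ ω, Y ω ≤ t + {ω | t < Y ω}.indicator (fun _ => K) ω + Y ω ^ 2 / K := by
    intro ω
    have hsq : 0 ≤ Y ω ^ 2 / K := by positivity
    by_cases hω : t < Y ω
    · rw [Set.indicator_of_mem (show ω ∈ {ω | t < Y ω} from hω)]
      rcases le_or_gt (Y ω) K with hYK | hYK
      · linarith
      · have : Y ω ≤ Y ω ^ 2 / K := by rw [le_div_iff₀ hK]; nlinarith
        linarith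
    · rw [Set.indicator_of_notMem (show ω ∉ {ω | t < Y ω} from hω)]
      linarith
  have hint : ∫ ω, Y ω ∂μ ≤ t + K * μ.real {ω | t < Y ω} + (∫ ω, Y ω ^ 2 ∂μ) / K := by
    have hind : Integrable ({ω | t < Y ω}.indicator fun _ => K) μ :=
      (integrable_const K).indicator hs
    calc ∫ ω, Y ω ∂μ
        ≤ ∫ ω, (t + {ω | t < Y ω}.indicator (fun _ => K) ω + Y ω ^ 2 / K) ∂μ :=
          integral_mono hY (((integrable_const t).add hind).add (hY2.div_const K)) hpointwise
      _ = t + K * μ.real {ω | t < Y ω} + (∫ ω, Y ω ^ 2 ∂μ) / K := by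
          rw [integral_add (f := fun ω => t + {ω | t < Y ω}.indicator (fun _ => K) ω)
            ((integrable_const t).add hind) (hY2.div_const K),
            integral_add (integrable_const t) hind, integral_indicator_const K hs, integral_div]
          simp [mul_comm]
  have hsecondK : (∫ ω, Y ω ^ 2 ∂μ) / K ≤ (∫ ω, Y ω ∂μ) / 2 := by
    rw [div_le_iff₀ hK]
    nlinarith
  rw [div_le_iff₀ (by positivity)]
  nlinarith

lemma integral_sub_const_sq_eq_variance_add {ξ : Ω → ℝ} (hξ : MemLp ξ 2 μ) (z : ℝ) :
    ∫ ω, (ξ ω - z) ^ 2 ∂μ = variance ξ μ + (μ[ξ] - z) ^ 2 := by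
  have hvar := variance_eq_sub (X := fun ω => ξ ω - z) (hξ.sub (memLp_const z))
  rw [variance_sub_const hξ.aestronglyMeasurable] at hvar
  have hint : ∫ ω, (ξ ω - z) ∂μ = μ[ξ] - z := by
    rw [integral_sub (hξ.integrable one_le_two) (integrable_const z)]
    simp
  simp only [Pi.pow_apply] at hvar
  rw [hvar, hint]
  ring

lemma integral_sq_le_integral_pow_four_add_one_div_two {ξ : Ω → ℝ}
    (hξ : Integrable (fun ω => ξ ω ^ 2) μ) (hξ4 : Integrable (fun ω => ξ ω ^ 4) μ) :
    ∫ ω, ξ ω ^ 2 ∂μ ≤ (∫ ω, ξ ω ^ 4 ∂μ + 1) / 2 := by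
  have hmono : ∫ ω, ξ ω ^ 2 ∂μ ≤ ∫ ω, (ξ ω ^ 4 + 1) / 2 ∂μ :=
    integral_mono hξ ((hξ4.add (integrable_const 1)).div_const 2)
      fun ω => by nlinarith [sq_nonneg (ξ ω ^ 2 - 1)]
  rwa [integral_div, integral_add hξ4 (integrable_const 1), integral_const, probReal_univ,
    one_smul] at hmono

lemma sub_pow_four_le (x z : ℝ) : (x - z) ^ 4 ≤ 8 * x ^ 4 + 8 * z ^ 4 := by
  nlinarith [sq_nonneg (x + z), sq_nonneg (x ^ 2 - z ^ 2),
    sq_nonneg ((x - z) ^ 2 - 2 * x ^ 2 - 2 * z ^ 2)]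

lemma integrable_sub_const_pow_four {ξ : Ω → ℝ} (hξ : Measurable ξ)
    (hξ4 : Integrable (fun ω => ξ ω ^ 4) μ) (z : ℝ) :
    Integrable (fun ω => (ξ ω - z) ^ 4) μ :=
  ((hξ4.const_mul 8).add (integrable_const (8 * z ^ 4))).mono'
    ((hξ.sub_const z).pow_const 4).aestronglyMeasurable
    (Filter.Eventually.of_forall fun ω => by
      rw [Real.norm_eq_abs, abs_of_nonneg (by positivity)]
      exact sub_pow_four_le (ξ ω) z)

lemma integral_sub_const_pow_four_le {ξ : Ω → ℝ} (hξ : Measurable ξ)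
    (hξ4 : Integrable (fun ω => ξ ω ^ 4) μ) (z : ℝ) :
    ∫ ω, (ξ ω - z) ^ 4 ∂μ ≤ 8 * ∫ ω, ξ ω ^ 4 ∂μ + 8 * z ^ 4 := by
  have hmono := integral_mono (g := fun ω => 8 * ξ ω ^ 4 + 8 * z ^ 4)
    (integrable_sub_const_pow_four hξ hξ4 z)
    ((hξ4.const_mul 8).add (integrable_const (8 * z ^ 4))) fun ω => sub_pow_four_le (ξ ω) z
  rwa [integral_add (hξ4.const_mul 8) (integrable_const _), integral_const_mul, integral_const,
    probReal_univ, one_smul] at hmono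

lemma measureReal_abs_sub_le_half_le {ξ : Ω → ℝ} (hξ : Measurable ξ) (hvar : variance ξ μ = 1)
    (hξ4 : Integrable (fun ω => ξ ω ^ 4) μ) {B : ℝ} (hB : 1 ≤ B) (hB4 : ∫ ω, ξ ω ^ 4 ∂μ ≤ B)
    (z : ℝ) :
    μ.real {ω | |ξ ω - z| ≤ 1 / 2} ≤ 1 - 1 / (1088 * B ^ 2) := by
  have hL2 : MemLp ξ 2 μ :=
    memLp_two_of_variance_ne_zero hξ.aestronglyMeasurable (by rw [hvar]; exact one_ne_zero)
  set c := μ[ξ] - z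
  have hmean_sq : μ[ξ] ^ 2 ≤ B := by
    have hsq := integral_sq_le_integral_pow_four_add_one_div_two hL2.integrable_sq hξ4
    have h := variance_eq_sub hL2
    simp only [Pi.pow_apply] at h
    linarith
  have hsecond : ∫ ω, (ξ ω - z) ^ 2 ∂μ = 1 + c ^ 2 := by
    rw [integral_sub_const_sq_eq_variance_add hL2, hvar]
  have hfourth : ∫ ω, ((ξ ω - z) ^ 2) ^ 2 ∂μ ≤ 136 * B ^ 2 * (∫ ω, (ξ ω - z) ^ 2 ∂μ) ^ 2 := by
    have h4 := integral_sub_const_pow_four_le hξ hξ4 z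
    have hz : z ^ 4 ≤ 8 * μ[ξ] ^ 4 + 8 * c ^ 4 := by
      simpa [c] using sub_pow_four_le (μ[ξ]) c
    have hmean_four : μ[ξ] ^ 4 ≤ B ^ 2 := by
      simpa only [← pow_mul] using pow_le_pow_left₀ (sq_nonneg _) hmean_sq 2
    have hB2 : B ≤ B ^ 2 := by nlinarith
    have hc : 1 ≤ (1 + c ^ 2) ^ 2 := by nlinarith [sq_nonneg c]
    simp only [← pow_mul, Nat.reduceMul]
    rw [hsecond]
    nlinarith [sq_nonneg c, mul_le_mul_of_nonneg_left hc (by positivity : (0 : ℝ) ≤ B ^ 2)]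
  have hPZ := one_div_le_measureReal_lt_of_integral_sq_le (t := 1 / 4)
    ((hξ.sub_const z).pow_const 2) (hL2.sub (memLp_const z)).integrable_sq
    (by simpa only [← pow_mul] using integrable_sub_const_pow_four hξ hξ4 z) (by positivity)
    (by norm_num) (by rw [hsecond]; positivity) (by rw [hsecond]; nlinarith [sq_nonneg c]) hfourth
  have hset : {ω | |ξ ω - z| ≤ 1 / 2} = {ω | 1 / 4 < (ξ ω - z) ^ 2}ᶜ := by
    ext ω
    rw [Set.mem_compl_iff, Set.mem_ofPred_eq, Set.mem_ofPred_eq, not_lt,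
      show (1 / 4 : ℝ) = (1 / 2) ^ 2 by norm_num, sq_le_sq,
      abs_of_pos (by norm_num : (0 : ℝ) < 1 / 2)]
  rw [hset, probReal_compl_eq_one_sub (measurableSet_lt measurable_const
    ((hξ.sub_const z).pow_const 2))]
  rw [show (8 : ℝ) * (136 * B ^ 2) = 1088 * B ^ 2 by ring] at hPZ
  linarith

lemma measureReal_mul_preimage_le {ζ ξ : Ω → ℝ} (hζ : Measurable ζ)
    (hζ01 : ∀ ω, ζ ω = 0 ∨ ζ ω = 1) (hind : IndepFun ζ ξ μ) {S : Set ℝ} (hS : MeasurableSet S) :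
    μ.real ((fun ω => ζ ω * ξ ω) ⁻¹' S) ≤
      1 - μ.real (ζ ⁻¹' {1}) + μ.real (ζ ⁻¹' {1}) * μ.real (ξ ⁻¹' S) := by
  have hsub : (fun ω => ζ ω * ξ ω) ⁻¹' S ⊆ (ζ ⁻¹' {1})ᶜ ∪ (ζ ⁻¹' {1} ∩ ξ ⁻¹' S) := by
    intro ω hω
    rcases hζ01 ω with h0 | h1
    · left
      simp [h0]
    · right
      simpa [h1] using hω
  have hmul : μ.real (ζ ⁻¹' {1} ∩ ξ ⁻¹' S) = μ.real (ζ ⁻¹' {1}) * μ.real (ξ ⁻¹' S) := by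
    simp only [measureReal_def,
      hind.measure_inter_preimage_eq_mul _ _ (measurableSet_singleton 1) hS, ENNReal.toReal_mul]
  calc μ.real ((fun ω => ζ ω * ξ ω) ⁻¹' S)
      ≤ μ.real ((ζ ⁻¹' {1})ᶜ ∪ (ζ ⁻¹' {1} ∩ ξ ⁻¹' S)) := measureReal_mono hsub
    _ ≤ μ.real (ζ ⁻¹' {1})ᶜ + μ.real (ζ ⁻¹' {1} ∩ ξ ⁻¹' S) := measureReal_union_le _ _
    _ = _ := by rw [probReal_compl_eq_one_sub (hζ (measurableSet_singleton 1)), hmul]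

end

/-- For every `B ≥ 1` there are constants `δ₀, ε ∈ (0,1)` depending only on `B` such that,
for every `p ∈ [0,1]`, every random variable `ξ` with variance `1` and `E[ξ⁴] ≤ B`, and
every `{0,1}`-valued random variable `ζ` independent of `ξ` with `P(ζ = 1) = p`, the Lévy
concentration function satisfies `L(ζξ, ε) ≤ 1 − δ₀ p`. -/
theorem levy_concentration_bernoulli_product :
    ∀ B : ℝ, 1 ≤ B →
      ∃ δ₀ ∈ Set.Ioo (0 : ℝ) 1, ∃ ε ∈ Set.Ioo (0 : ℝ) 1,
        ∀ p : ℝ, 0 ≤ p → p ≤ 1 →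
        ∀ (Ω : Type) [MeasurableSpace Ω] (μ : Measure Ω) [IsProbabilityMeasure μ]
          (ξ ζ : Ω → ℝ),
          Measurable ξ → Measurable ζ →
          variance ξ μ = 1 →
          Integrable (fun ω => ξ ω ^ 4) μ →
          (∫ ω, ξ ω ^ 4 ∂μ) ≤ B →
          (∀ ω, ζ ω = 0 ∨ ζ ω = 1) →
          IndepFun ζ ξ μ →
          μ {ω | ζ ω = 1} = ENNReal.ofReal p →
          levyConcentration μ (fun ω => ζ ω * ξ ω) ε ≤ 1 - δ₀ * p := by
  intro B hB
  refine ⟨1 / (1088 * B ^ 2), ⟨by positivity, ?_⟩, 1 / 2, ⟨by norm_num, by norm_num⟩, ?_⟩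
  · rw [div_lt_one (by positivity)]
    nlinarith
  intro p hp0 _ Ω _ μ _ ξ ζ hξ hζ hvar hξ4 hB4 hζ01 hind hp
  have hζp : μ.real (ζ ⁻¹' {1}) = p := by
    rw [measureReal_def, ← ENNReal.toReal_ofReal hp0, ← hp]
    rfl
  refine ciSup_le fun z => ?_
  have hprod := measureReal_mul_preimage_le hζ hζ01 hind
    (measurableSet_le (measurable_id.sub_const z).abs measurable_const :
      MeasurableSet {x : ℝ | |x - z| ≤ 1 / 2})
  calc μ.real {ω | |ζ ω * ξ ω - z| ≤ 1 / 2}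
      ≤ 1 - p + p * μ.real {ω | |ξ ω - z| ≤ 1 / 2} := by rwa [hζp] at hprod
    _ ≤ 1 - p + p * (1 - 1 / (1088 * B ^ 2)) := by
        gcongr
        exact measureReal_abs_sub_le_half_le hξ hvar hξ4 hB hB4 z
    _ = 1 - 1 / (1088 * B ^ 2) * p := by ring
end
end

section
/- Let N, s, m be positive integers with m dividing both N and s and s ≤ N. Let U₁ be the unconstrained sparsity family (all s-subsets of {1,…,N}), U₂ the piece-wise sparsity family, and U₃ the block sparsity family. Then for every 0 ≤ i ≤ s, Q(i,U₃) ≤ Q(i,U₂) ≤ Q(i,U₁), where Q(i,U) is the number of i-subsets of {1,…,N} contained in some member of U. -/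
open scoped Classical

/-- The `i`-th piece `{(i-1)·N/m + j : 1 ≤ j ≤ N/m}` (0-indexed) of `{1,…,N}`. -/
def piece (N m : ℕ) (i : Fin m) : Finset (Fin N) :=
  Finset.univ.filter fun a : Fin N => a.val / (N / m) = i.val

/-- The `i`-th block `B_i = {(i-1)m + j : 1 ≤ j ≤ m}` (0-indexed) of `{1,…,N}`. -/
def block (N m : ℕ) (i : Fin (N / m)) : Finset (Fin N) :=
  Finset.univ.filter fun a : Fin N => a.val / m = i.val

/-- Unconstrained sparsity family: all `s`-subsets of `{1,…,N}`. -/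
def U1 (N s : ℕ) : Set (Finset (Fin N)) := {S | S.card = s}

/-- Piece-wise sparsity family: unions of `s/m`-subsets, one from each of the `m` pieces. -/
def U2 (N s m : ℕ) : Set (Finset (Fin N)) :=
  {S | ∃ T : Fin m → Finset (Fin N),
    (∀ i, T i ⊆ piece N m i ∧ (T i).card = s / m) ∧ S = Finset.univ.biUnion T}

/-- Block sparsity family: unions of `s/m` of the `N/m` blocks of size `m`. -/
def U3 (N s m : ℕ) : Set (Finset (Fin N)) :=
  {S | ∃ I : Finset (Fin (N / m)), I.card = s / m ∧ S = I.biUnion (block N m)}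

/-- `Q t U` counts the `t`-subsets of `{1,…,N}` contained in some member of `U`. -/
noncomputable def Q {N : ℕ} (t : ℕ) (U : Set (Finset (Fin N))) : ℕ :=
  (Finset.univ.filter fun I : Finset (Fin N) => I.card = t ∧ ∃ S ∈ U, I ⊆ S).card

/-! `Q t` is monotone under containment of families and does not decrease along an injective
relabelling of the ground set. Every member of `U₂` has exactly `m · (s/m) = s` elements, so
`U₂ ⊆ U₁`. Reading `{1,…,N}` row by row as an `(N/m) × m` array, the blocks are its rows and the
pieces are the rows of its transpose; transposition therefore maps a union of `s/m` blocks to a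
set meeting each piece in `s/m` elements, a member of `U₂`. -/

section

variable {N m : ℕ}

def pieceEquiv (hmN : m ∣ N) : Fin m × Fin (N / m) ≃ Fin N :=
  finProdFinEquiv.trans (finCongr (Nat.mul_div_cancel' hmN))

def blockEquiv (hmN : m ∣ N) : Fin (N / m) × Fin m ≃ Fin N :=
  finProdFinEquiv.trans (finCongr (Nat.div_mul_cancel hmN))

lemma pieceEquiv_mem_piece (hmN : m ∣ N) (i : Fin m) (j : Fin (N / m)) :
    pieceEquiv hmN (i, j) ∈ piece N m i := by
  simp [piece, pieceEquiv, Nat.add_mul_div_left _ _ j.pos, Nat.div_eq_of_lt j.2]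

lemma blockEquiv_mem_block_iff (hmN : m ∣ N) (j j' : Fin (N / m)) (r : Fin m) :
    blockEquiv hmN (j', r) ∈ block N m j ↔ j' = j := by
  simp [block, blockEquiv, Nat.add_mul_div_left _ _ r.pos, Nat.div_eq_of_lt r.2, Fin.ext_iff]

/-- Sends the `r`-th element of the `j`-th block to the `j`-th element of the `r`-th piece. -/
def transposeEquiv (hmN : m ∣ N) : Fin N ≃ Fin N :=
  (blockEquiv hmN).symm.trans ((Equiv.prodComm _ _).trans (pieceEquiv hmN))

lemma transposeEquiv_blockEquiv (hmN : m ∣ N) (j : Fin (N / m)) (r : Fin m) :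
    transposeEquiv hmN (blockEquiv hmN (j, r)) = pieceEquiv hmN (r, j) := by
  simp [transposeEquiv]

lemma pairwise_disjoint_piece : Pairwise (Function.onFun Disjoint (piece N m)) := by
  intro i i' hii'
  refine Finset.disjoint_left.2 fun a hi hi' => hii' (Fin.ext ?_)
  simp only [piece, Finset.mem_filter, Finset.mem_univ, true_and] at hi hi'
  rw [← hi, ← hi']

lemma Q_le_Q_of_forall_map_subset {M : ℕ} (t : ℕ) {U : Set (Finset (Fin N))}
    {V : Set (Finset (Fin M))} (e : Fin N ↪ Fin M) (h : ∀ S ∈ U, ∃ T ∈ V, S.map e ⊆ T) :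
    Q t U ≤ Q t V := by
  refine Finset.card_le_card_of_injOn (Finset.map e) (fun I hI => ?_)
    (Finset.map_injective e).injOn
  simp only [Finset.coe_filter, Finset.mem_univ, true_and, Set.mem_ofPred_eq] at hI ⊢
  obtain ⟨hcard, S, hS, hIS⟩ := hI
  obtain ⟨T, hT, hST⟩ := h S hS
  exact ⟨by rw [Finset.card_map, hcard], T, hT, (Finset.map_subset_map.2 hIS).trans hST⟩

lemma Q_mono (t : ℕ) {U V : Set (Finset (Fin N))} (hUV : U ⊆ V) : Q t U ≤ Q t V :=
  Q_le_Q_of_forall_map_subset t (Function.Embedding.refl _) fun S hS =>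
    ⟨S, hUV hS, by rw [Finset.map_refl]⟩

lemma U2_subset_U1 {s : ℕ} (hms : m ∣ s) : U2 N s m ⊆ U1 N s := by
  rintro _ ⟨T, hT, rfl⟩
  have hdisj : (Set.univ : Set (Fin m)).PairwiseDisjoint T := fun i _ i' _ hii' =>
    (pairwise_disjoint_piece hii').mono (hT i).1 (hT i').1
  simp only [U1, Set.mem_ofPred_eq]
  rw [Finset.card_biUnion (by simpa using hdisj), Finset.sum_congr rfl fun i _ => (hT i).2,
    Finset.sum_const, Finset.card_univ, Fintype.card_fin, smul_eq_mul, Nat.mul_div_cancel' hms]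

lemma exists_U2_superset_map_transposeEquiv {s : ℕ} (hmN : m ∣ N) {S : Finset (Fin N)}
    (hS : S ∈ U3 N s m) : ∃ T ∈ U2 N s m, S.map (transposeEquiv hmN).toEmbedding ⊆ T := by
  obtain ⟨J, hJ, rfl⟩ := hS
  let column : Fin m → Fin (N / m) ↪ Fin N := fun r =>
    ⟨fun j => pieceEquiv hmN (r, j), fun j j' h => by simpa using h⟩
  refine ⟨Finset.univ.biUnion fun r => J.map (column r), ⟨fun r => J.map (column r),
    fun r => ⟨?_, by rw [Finset.card_map, hJ]⟩, rfl⟩, ?_⟩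
  · intro x hx
    obtain ⟨j, -, rfl⟩ := Finset.mem_map.1 hx
    exact pieceEquiv_mem_piece hmN r j
  · intro x hx
    obtain ⟨a, ha, rfl⟩ := Finset.mem_map.1 hx
    obtain ⟨j, hj, ha⟩ := Finset.mem_biUnion.1 ha
    obtain ⟨⟨j', r⟩, rfl⟩ := (blockEquiv hmN).surjective a
    obtain rfl := (blockEquiv_mem_block_iff hmN j j' r).1 ha
    rw [Equiv.toEmbedding_apply, transposeEquiv_blockEquiv]
    exact Finset.mem_biUnion.2 ⟨r, Finset.mem_univ _, Finset.mem_map_of_mem (column r) hj⟩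

end

theorem Q_block_le_Q_piecewise_le_Q_unconstrained_general (N s m : ℕ)
    (hmN : m ∣ N) (hms : m ∣ s) :
    ∀ i ≤ s, Q i (U3 N s m) ≤ Q i (U2 N s m) ∧ Q i (U2 N s m) ≤ Q i (U1 N s) := fun i _ =>
  ⟨Q_le_Q_of_forall_map_subset i (transposeEquiv hmN).toEmbedding fun _ =>
      exists_U2_superset_map_transposeEquiv hmN,
    Q_mono i (U2_subset_U1 hms)⟩

theorem Q_block_le_Q_piecewise_le_Q_unconstrained (N s m : ℕ)
    (hN : 0 < N) (hs : 0 < s) (hm : 0 < m) (hmN : m ∣ N) (hms : m ∣ s) (hsN : s ≤ N) :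
    ∀ i ≤ s, Q i (U3 N s m) ≤ Q i (U2 N s m) ∧ Q i (U2 N s m) ≤ Q i (U1 N s) :=
  Q_block_le_Q_piecewise_le_Q_unconstrained_general N s m hmN hms
end

section
/- Let N, s, m be positive integers with m dividing both N and s and s ≤ N, and let U₂ be the piece-wise sparsity family. Then for every 0 ≤ i ≤ s, Q(i,U₂) = Σ ∏_{l=1}^{m} C(N/m, j_l), where the sum is over all m-tuples (j_1,…,j_m) of integers with 0 ≤ j_l ≤ s/m for each l and j_1 + ⋯ + j_m = i, and C(a,b) denotes the binomial coefficient. -/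
open scoped Classical

/-! A set `I` lies in a member of `U2` exactly when it meets every piece in at most `s/m`
points: as `s/m ≤ N/m`, each such intersection extends to an `s/m`-subset of its piece.
Sorting these sets by the vector `j` of their piece counts, the sets with count vector `j`
correspond to independent choices of a `j l`-subset of each piece, which has `N/m` points. -/

open Finset

section FiberCounting

variable {α ι : Type*} [Fintype α] [DecidableEq α] [Fintype ι] [DecidableEq ι] (f : α → ι)

theorem filter_biUnion_eq_of_subset_fiber {T : ι → Finset α}
    (hT : ∀ l, T l ⊆ ({a | f a = l} : Finset α)) (l : ι) :
    {a ∈ univ.biUnion T | f a = l} = T l := by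
  ext a
  simp only [mem_filter, mem_biUnion, mem_univ, true_and]
  constructor
  · rintro ⟨⟨l', ha⟩, rfl⟩
    rwa [(mem_filter.1 (hT l' ha)).2]
  · intro ha
    exact ⟨⟨l, ha⟩, (mem_filter.1 (hT l ha)).2⟩

theorem card_filter_fiber_card_eq_prod_choose (j : ι → ℕ) :
    #{I : Finset α | ∀ l, #{a ∈ I | f a = l} = j l} =
      ∏ l, (#{a | f a = l}).choose (j l) := by
  simp_rw [← card_powersetCard, ← Fintype.card_piFinset]
  refine card_nbij' (fun I l => {a ∈ I | f a = l}) (fun T => univ.biUnion T) ?_ ?_ ?_ ?_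
  · intro I hI
    simp only [coe_filter, mem_univ, true_and, Set.mem_ofPred_eq] at hI
    simp only [mem_coe, Fintype.mem_piFinset, mem_powersetCard]
    exact fun l => ⟨filter_subset_filter _ (subset_univ I), hI l⟩
  · intro T hT
    simp only [mem_coe, Fintype.mem_piFinset, mem_powersetCard] at hT
    simp only [coe_filter, mem_univ, true_and, Set.mem_ofPred_eq]
    intro l
    rw [filter_biUnion_eq_of_subset_fiber f (fun l => (hT l).1), (hT l).2]
  · intro I _
    exact biUnion_filter_eq_of_maps_to fun a _ => mem_univ (f a)
  · intro T hT
    simp only [mem_coe, Fintype.mem_piFinset, mem_powersetCard] at hT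
    exact funext (filter_biUnion_eq_of_subset_fiber f fun l => (hT l).1)

theorem exists_fiberwise_superset_iff {r : ℕ} (hr : ∀ l, r ≤ #{a | f a = l}) (I : Finset α) :
    (∃ T : ι → Finset α, (∀ l, T l ⊆ ({a | f a = l} : Finset α) ∧ #(T l) = r) ∧
        I ⊆ univ.biUnion T) ↔
      ∀ l, #{a ∈ I | f a = l} ≤ r := by
  constructor
  · rintro ⟨T, hT, hIT⟩ l
    calc #{a ∈ I | f a = l} ≤ #{a ∈ univ.biUnion T | f a = l} :=
          card_le_card (filter_subset_filter _ hIT)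
      _ = r := by rw [filter_biUnion_eq_of_subset_fiber f (fun l => (hT l).1), (hT l).2]
  · intro hI
    choose T hIT hT hTr using fun l =>
      exists_subsuperset_card_eq (filter_subset_filter (f · = l) (subset_univ I)) (hI l) (hr l)
    refine ⟨T, fun l => ⟨hT l, hTr l⟩, ?_⟩
    calc I = univ.biUnion fun l => {a ∈ I | f a = l} :=
          (biUnion_filter_eq_of_maps_to fun a _ => mem_univ (f a)).symm
      _ ⊆ univ.biUnion T := biUnion_mono fun l _ => hIT l

theorem card_filter_card_eq_fiber_card_le_eq_sum_prod_choose (r t : ℕ) :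
    #{I : Finset α | #I = t ∧ ∀ l, #{a ∈ I | f a = l} ≤ r} =
      ∑ j ∈ {j : ι → Fin (r + 1) | ∑ l, (j l : ℕ) = t}, ∏ l, (#{a | f a = l}).choose (j l) := by
  have hdecomp : ({I | #I = t ∧ ∀ l, #{a ∈ I | f a = l} ≤ r} : Finset (Finset α)) =
      ({j | ∑ l, (j l : ℕ) = t} : Finset (ι → Fin (r + 1))).biUnion
        fun j => {I : Finset α | ∀ l, #{a ∈ I | f a = l} = j l} := by
    ext I
    have hcard : #I = ∑ l, #{a ∈ I | f a = l} :=
      card_eq_sum_card_fiberwise fun a _ => mem_univ (f a)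
    simp only [mem_filter, mem_univ, true_and, mem_biUnion]
    constructor
    · rintro ⟨rfl, hI⟩
      exact ⟨fun l => ⟨_, Nat.lt_succ_of_le (hI l)⟩, hcard.symm, fun l => rfl⟩
    · rintro ⟨j, hj, hI⟩
      exact ⟨hcard.trans ((sum_congr rfl fun l _ => hI l).trans hj),
        fun l => (hI l) ▸ Nat.le_of_lt_succ (j l).isLt⟩
  rw [hdecomp, card_biUnion]
  · exact sum_congr rfl fun j _ => card_filter_fiber_card_eq_prod_choose f _
  · intro j _ j' _ hne
    exact disjoint_filter.2 fun I _ hj hj' =>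
      hne (funext fun l => Fin.ext ((hj l).symm.trans (hj' l)))

end FiberCounting

section Pieces

variable {N m : ℕ}

def pieceIndex (hmN : m ∣ N) (a : Fin N) : Fin m :=
  ⟨a / (N / m), Nat.div_lt_of_lt_mul (by rw [Nat.div_mul_cancel hmN]; exact a.isLt)⟩

theorem piece_eq_filter_pieceIndex (hmN : m ∣ N) (l : Fin m) :
    piece N m l = ({a | pieceIndex hmN a = l} : Finset (Fin N)) := by
  ext a
  simp [piece, pieceIndex, Fin.ext_iff]

theorem card_piece (hmN : m ∣ N) (l : Fin m) : #(piece N m l) = N / m := by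
  have hN : m * (N / m) = N := Nat.mul_div_cancel' hmN
  calc #(piece N m l) = #(({l} : Finset (Fin m)) ×ˢ (univ : Finset (Fin (N / m)))) := by
        refine (card_equiv (finProdFinEquiv.trans (finCongr hN)) fun x => ?_).symm
        have hk : 0 < N / m := x.2.pos
        simp [piece, Nat.add_mul_div_left _ _ hk, Nat.div_eq_of_lt x.2.isLt, Fin.ext_iff,
          Prod.ext_iff, eq_comm]
    _ = N / m := by simp

theorem exists_mem_U2_superset_iff {s : ℕ} (hmN : m ∣ N) (hsN : s ≤ N) (I : Finset (Fin N)) :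
    (∃ S ∈ U2 N s m, I ⊆ S) ↔ ∀ l, #{a ∈ I | pieceIndex hmN a = l} ≤ s / m := by
  have hr : ∀ l, s / m ≤ #{a | pieceIndex hmN a = l} := fun l => by
    rw [← piece_eq_filter_pieceIndex hmN, card_piece hmN]
    exact Nat.div_le_div_right hsN
  rw [← exists_fiberwise_superset_iff (pieceIndex hmN) hr I]
  simp only [U2, Set.mem_ofPred_eq, piece_eq_filter_pieceIndex hmN]
  constructor
  · rintro ⟨_, ⟨T, hT, rfl⟩, hIT⟩
    exact ⟨T, hT, hIT⟩
  · rintro ⟨T, hT, hIT⟩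
    exact ⟨_, ⟨T, hT, rfl⟩, hIT⟩

end Pieces

theorem Q_piecewise_eq_sum_prod_choose_general (N s m : ℕ) (hmN : m ∣ N) (hsN : s ≤ N) :
    ∀ i ≤ s,
      Q i (U2 N s m) =
        ∑ j ∈ Finset.univ.filter
            (fun j : Fin m → Fin (s / m + 1) => ∑ l, ((j l : ℕ)) = i),
          ∏ l, Nat.choose (N / m) (j l) := by
  intro i _
  have hpiece : ∀ l, N / m = #{a | pieceIndex hmN a = l} := fun l => by
    rw [← piece_eq_filter_pieceIndex hmN, card_piece hmN]
  rw [sum_congr rfl fun j _ => prod_congr rfl fun l _ => congrArg (Nat.choose · (j l)) (hpiece l),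
    ← card_filter_card_eq_fiber_card_le_eq_sum_prod_choose, Q]
  -- The two filters decide `∀ l, …` through different instances, so compare them pointwise.
  congr 1
  ext I
  simp only [mem_filter, mem_univ, true_and, exists_mem_U2_superset_iff hmN hsN]

theorem Q_piecewise_eq_sum_prod_choose (N s m : ℕ)
    (hN : 0 < N) (hs : 0 < s) (hm : 0 < m) (hmN : m ∣ N) (hms : m ∣ s) (hsN : s ≤ N) :
    ∀ i ≤ s,
      Q i (U2 N s m) =
        ∑ j ∈ Finset.univ.filter
            (fun j : Fin m → Fin (s / m + 1) => ∑ l, ((j l : ℕ)) = i),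
          ∏ l, Nat.choose (N / m) (j l) :=
  Q_piecewise_eq_sum_prod_choose_general N s m hmN hsN
end

section
/- Let N, s, m be positive integers with m dividing both N and s and s ≤ N. Define the permutation σ of {1,…,N} by σ(qm + r + 1) = r·(N/m) + q + 1 for 0 ≤ q < N/m and 0 ≤ r < m. Then σ maps every member of the block sparsity family U₃ to a member of the piece-wise sparsity family U₂; that is, for every S ∈ U₃, the image σ(S) belongs to U₂. -/
open scoped Classical

/-- The permutation of `{1,…,N}` sending (0-indexed) `q·m + r` to `r·(N/m) + q`
for `0 ≤ q < N/m`, `0 ≤ r < m`. -/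
def sigmaFun (N m : ℕ) (hm : 0 < m) (hmN : m ∣ N) (a : Fin N) : Fin N :=
  ⟨(a.val % m) * (N / m) + a.val / m, by
    have hq : a.val / m < N / m := Nat.div_lt_div_of_lt_of_dvd hmN a.isLt
    have hr : a.val % m < m := Nat.mod_lt _ hm
    calc (a.val % m) * (N / m) + a.val / m
        < (a.val % m) * (N / m) + N / m := Nat.add_lt_add_left hq _
      _ = (a.val % m + 1) * (N / m) := by ring
      _ ≤ m * (N / m) := Nat.mul_le_mul_right _ (Nat.succ_le_of_lt hr)
      _ = N := Nat.mul_div_cancel' hmN⟩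

/-! Writing a position as `i·m + r` (block `i`) or as `r·(N/m) + i` (piece `r`), with `i < N/m`
and `r < m`, `σ` swaps the two coordinates. So `σ` maps block `i` onto `{r·(N/m) + i : r < m}`,
which meets each piece in exactly one point, and the image of a union of `s/m` blocks meets each
piece in `s/m` points. -/

namespace SparsityTranspose

variable {N m : ℕ}

def piecePoint (r : Fin m) (i : Fin (N / m)) : Fin N :=
  Fin.castLE (Nat.mul_div_le N m) (finProdFinEquiv (r, i))

def blockPoint (i : Fin (N / m)) (r : Fin m) : Fin N :=
  Fin.castLE (Nat.div_mul_le_self N m) (finProdFinEquiv (i, r))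

theorem piecePoint_val (r : Fin m) (i : Fin (N / m)) :
    (piecePoint r i).val = i + N / m * r :=
  finProdFinEquiv_apply_val _

theorem blockPoint_val (i : Fin (N / m)) (r : Fin m) :
    (blockPoint i r).val = r + m * i :=
  finProdFinEquiv_apply_val _

theorem piecePoint_mem_piece (r : Fin m) (i : Fin (N / m)) : piecePoint r i ∈ piece N m r := by
  simp [piece, piecePoint_val, Nat.add_mul_div_left _ _ i.pos, Nat.div_eq_of_lt i.isLt]

theorem piecePoint_injective (r : Fin m) : Function.Injective (piecePoint (N := N) r) := by
  intro i j h
  have hval := congrArg Fin.val h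
  rw [piecePoint_val, piecePoint_val, Nat.add_right_cancel_iff] at hval
  exact Fin.ext hval

theorem block_eq_image_blockPoint (hm : 0 < m) (i : Fin (N / m)) :
    block N m i = Finset.univ.image (blockPoint i) := by
  ext a
  simp only [block, Finset.mem_filter, Finset.mem_univ, true_and, Finset.mem_image]
  constructor
  · intro ha
    refine ⟨⟨a % m, Nat.mod_lt _ hm⟩, Fin.ext ?_⟩
    rw [blockPoint_val, ← ha, Nat.mod_add_div]
  · rintro ⟨r, rfl⟩
    rw [blockPoint_val, Nat.add_mul_div_left _ _ r.pos, Nat.div_eq_of_lt r.isLt, zero_add]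

theorem sigmaFun_blockPoint (hm : 0 < m) (hmN : m ∣ N) (i : Fin (N / m)) (r : Fin m) :
    sigmaFun N m hm hmN (blockPoint i r) = piecePoint r i := by
  ext
  simp only [sigmaFun, blockPoint_val, piecePoint_val, Nat.add_mul_mod_self_left,
    Nat.mod_eq_of_lt r.isLt, Nat.add_mul_div_left _ _ hm, Nat.div_eq_of_lt r.isLt]
  ring

theorem image_sigmaFun_biUnion_block (hm : 0 < m) (hmN : m ∣ N) (I : Finset (Fin (N / m))) :
    (I.biUnion (block N m)).image (sigmaFun N m hm hmN) =
      Finset.univ.biUnion fun r => I.image (piecePoint r) := by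
  simp only [Finset.biUnion_image, block_eq_image_blockPoint hm, Finset.image_image,
    Function.comp_def, sigmaFun_blockPoint]
  rw [Finset.biUnion_image_left, Finset.biUnion_image_right (f := fun i r => piecePoint r i)]

end SparsityTranspose

theorem image_sigmaFun_block_mem_piecewise_general (N s m : ℕ)
    (hm : 0 < m) (hmN : m ∣ N) :
    ∀ S ∈ U3 N s m, S.image (sigmaFun N m hm hmN) ∈ U2 N s m := by
  rintro S ⟨I, hI, rfl⟩
  refine ⟨fun r => I.image (SparsityTranspose.piecePoint r), fun r => ⟨?_, ?_⟩,
    SparsityTranspose.image_sigmaFun_biUnion_block hm hmN I⟩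
  · exact Finset.image_subset_iff.mpr fun i _ => SparsityTranspose.piecePoint_mem_piece r i
  · rw [Finset.card_image_of_injective _ (SparsityTranspose.piecePoint_injective r), hI]

theorem image_sigmaFun_block_mem_piecewise (N s m : ℕ)
    (hN : 0 < N) (hs : 0 < s) (hm : 0 < m) (hmN : m ∣ N) (hms : m ∣ s) (hsN : s ≤ N) :
    ∀ S ∈ U3 N s m, S.image (sigmaFun N m hm hmN) ∈ U2 N s m :=
  image_sigmaFun_block_mem_piecewise_general N s m hm hmN
end

section
/- Let A ∈ ℝ^{N×N} be symmetric, let w ∈ ℝ^N have all entries nonzero, let Λ ∈ ℝ^{N×N} be an invertible diagonal matrix, and set Ā = Λ(A ⊙ (w wᵀ)). Suppose I ⊆ {1,…,N} is such that every row of A indexed by I is zero and the principal submatrix A_{I^c,I^c} (rows and columns indexed by the complement I^c of I) is non-singular. Then for every S ⊆ {1,…,N} with I ⊆ S, the N × (N+|S|) matrix [Ā, I_S] has rank N, where I_S is the submatrix of the N × N identity matrix formed by the columns indexed by S. -/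
/-!
If `v` is in the left kernel of `[Ā, I_S]`, then `v` vanishes on `S ⊇ I`. Since
`Ā = diag(d ∘ w) A diag(w)` with `w` nowhere zero, `x = v ∘ d ∘ w` satisfies `xᵀ A = 0` and is
supported on `Iᶜ`; reading this on the columns `Iᶜ` gives `x_{Iᶜ}ᵀ A_{Iᶜ,Iᶜ} = 0`, so `x = 0`
and hence `v = 0`.
-/

open Matrix

namespace Matrix

variable {m n K : Type*} [Fintype m]

theorem hadamard_vecMulVec [DecidableEq m] [Fintype n] [DecidableEq n] {R : Type*}
    [CommSemiring R] (A : Matrix m n R) (u : m → R) (w : n → R) :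
    A ⊙ vecMulVec u w = diagonal u * A * diagonal w := by
  ext i j
  simp only [hadamard_apply, vecMulVec_apply, mul_diagonal, diagonal_mul]
  ring

theorem vecMul_one_submatrix_id {R : Type*} [NonAssocSemiring R] [DecidableEq m]
    {ι : Type*} (v : m → R) (f : ι → m) :
    v ᵥ* (1 : Matrix m m R).submatrix id f = v ∘ f := by
  ext j
  simp [vecMul, dotProduct, one_apply]

theorem rank_eq_card_of_vecMul_eq_zero [Fintype n] [Field K] {M : Matrix m n K}
    (h : ∀ v, v ᵥ* M = 0 → v = 0) : M.rank = Fintype.card m :=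
  LinearIndependent.rank_matrix <| vecMul_injective_iff.mp <|
    (injective_iff_map_eq_zero M.vecMulLinear).mpr h

theorem eq_zero_of_vecMul_eq_zero_of_det_submatrix_ne_zero [DecidableEq m] [Field K]
    {A : Matrix m m K} {s : Finset m}
    (hdet : (A.submatrix (Subtype.val : s → m) Subtype.val).det ≠ 0)
    {x : m → K} (hx : ∀ i ∉ s, x i = 0) (hxA : x ᵥ* A = 0) : x = 0 := by
  have hrestrict :
      (x ∘ Subtype.val) ᵥ* A.submatrix (Subtype.val : s → m) (Subtype.val : s → m) = 0 := by
    ext j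
    have hcol := congrFun hxA j
    simp only [vecMul, dotProduct, Pi.zero_apply] at hcol ⊢
    simp only [submatrix_apply, Function.comp_apply]
    rwa [Finset.sum_coe_sort s (fun i => x i * A i j),
      Finset.sum_subset (Finset.subset_univ s) fun i _ hi => by simp [hx i hi]]
  have hzero : x ∘ Subtype.val = (0 : s → K) := by
    by_contra hne
    exact hdet (exists_vecMul_eq_zero_iff.mp ⟨_, hne, hrestrict⟩)
  ext i
  by_cases hi : i ∈ s
  · exact congrFun hzero ⟨i, hi⟩
  · exact hx i hi

end Matrix

theorem rank_append_identity_columns_of_zero_rows_general {N : ℕ}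
    (A : Matrix (Fin N) (Fin N) ℝ) (w : Fin N → ℝ) (d : Fin N → ℝ)
    (hw : ∀ i, w i ≠ 0) (hd : ∀ i, d i ≠ 0)
    (I : Finset (Fin N))
    (hsub : (A.submatrix (Subtype.val : {i : Fin N // i ∈ Iᶜ} → Fin N)
        (Subtype.val : {i : Fin N // i ∈ Iᶜ} → Fin N)).det ≠ 0) :
    ∀ S : Finset (Fin N), I ⊆ S →
      (Matrix.fromCols (Matrix.diagonal d * Matrix.hadamard A (Matrix.vecMulVec w w))
          ((1 : Matrix (Fin N) (Fin N) ℝ).submatrix id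
            (Subtype.val : {i : Fin N // i ∈ S} → Fin N))).rank = N := by
  intro S hIS
  refine (rank_eq_card_of_vecMul_eq_zero fun v hv => ?_).trans (Fintype.card_fin N)
  rw [hadamard_vecMulVec, ← Matrix.mul_assoc, ← Matrix.mul_assoc, diagonal_mul_diagonal] at hv
  have hvS : ∀ i ∈ S, v i = 0 := fun i hi => by
    simpa [vecMul_one_submatrix_id] using congrFun hv (.inr ⟨i, hi⟩)
  have hvA : (v ᵥ* diagonal fun i => d i * w i) ᵥ* A = 0 := by
    ext j
    simpa only [vecMul_fromCols, Sum.elim_inl, ← vecMul_vecMul, vecMul_diagonal, Pi.zero_apply,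
      mul_eq_zero, hw j, or_false] using congrFun hv (.inl j)
  have hvdw : (v ᵥ* diagonal fun i => d i * w i) = 0 :=
    eq_zero_of_vecMul_eq_zero_of_det_submatrix_ne_zero hsub
      (fun i hi => by simp [vecMul_diagonal, hvS i (hIS (by simpa using hi))]) hvA
  ext i
  simpa [vecMul_diagonal, hd i, hw i] using congrFun hvdw i

/-- Let `A` be symmetric, `w` have all entries nonzero, `Λ = diagonal d` be an invertible
diagonal matrix, and `Ā = Λ (A ⊙ w wᵀ)`. If every row of `A` indexed by `I` is zero and the
principal submatrix `A_{Iᶜ,Iᶜ}` is non-singular, then for every `S ⊇ I` the matrix `[Ā, I_S]`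
has rank `N`. -/
theorem rank_append_identity_columns_of_zero_rows {N : ℕ}
    (A : Matrix (Fin N) (Fin N) ℝ) (w : Fin N → ℝ) (d : Fin N → ℝ)
    (hA : A.IsSymm) (hw : ∀ i, w i ≠ 0) (hd : ∀ i, d i ≠ 0)
    (I : Finset (Fin N))
    (hrows : ∀ i ∈ I, ∀ j, A i j = 0)
    (hsub : (A.submatrix (Subtype.val : {i : Fin N // i ∈ Iᶜ} → Fin N)
        (Subtype.val : {i : Fin N // i ∈ Iᶜ} → Fin N)).det ≠ 0) :
    ∀ S : Finset (Fin N), I ⊆ S →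
      (Matrix.fromCols (Matrix.diagonal d * Matrix.hadamard A (Matrix.vecMulVec w w))
          ((1 : Matrix (Fin N) (Fin N) ℝ).submatrix id
            (Subtype.val : {i : Fin N // i ∈ S} → Fin N))).rank = N :=
  rank_append_identity_columns_of_zero_rows_general A w d hw hd I hsub
end
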